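/- arXiv:1809.05644 — 2 statements merged into one kernel-verified Lean document; each statement's English description precedes it below -/
import Mathlib

section
/- Consider the discrete-time scalar update M(ω(k+1) − ω(k)) = T(v(k) + u(k)) with the reference control u(k) = min{0, γ(ω̄ − ω(k))/(ω(k) − ω̄^thr) − v(k)} applied whenever ω(k) ≥ ω̄^thr (and u(k) arbitrary with ω evolving freely otherwise but assumed to remain below ω̄^thr). If ω̄^thr < ω(0) ≤ ω̄, γ > 0, M > 0, and v(k) is bounded by some constant V, then there exists T̄ > 0 such that for all 0 < T ≤ T̄, the trajectory satisfies ω(k) ≤ ω̄ for all k. -/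
/-- Discrete-time barrier control: there exists T̄ > 0 such that for every
sampling period 0 < T ≤ T̄, the trajectory generated by the reference control
stays below ω̄. -/
theorem discrete_barrier_invariance
    (M γ V ωthr ωbar : ℝ) (hM : 0 < M) (hγ : 0 < γ) (hV : 0 ≤ V)
    (hthr : ωthr < ωbar)
    (v : ℕ → ℝ) (hv : ∀ k, |v k| ≤ V)
    (ω : ℝ → ℕ → ℝ)  -- family of trajectories indexed by the sampling period T
    (hinit : ∀ T : ℝ, ωthr < ω T 0 ∧ ω T 0 ≤ ωbar)
    (hwell : ∀ T : ℝ, 0 < T → ∀ k : ℕ, ωthr < ω T k)  -- well-posedness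
    (hdyn : ∀ T : ℝ, 0 < T → ∀ k : ℕ,
      ω T (k + 1) = ω T k +
        (T / M) * (v k + min 0 (γ * (ωbar - ω T k) / (ω T k - ωthr) - v k))) :
    ∃ Tbar : ℝ, 0 < Tbar ∧ ∀ T : ℝ, 0 < T → T ≤ Tbar →
      ∀ k : ℕ, ω T k ≤ ωbar := by
  have hdenpos : 0 < γ + V + 1 := by linarith
  refine ⟨M * (ωbar - ωthr) / (γ + V + 1), div_pos (mul_pos hM (by linarith)) hdenpos, ?_⟩
  intro T hT hTle k
  induction k with
  | zero => exact (hinit T).2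
  | succ k ih =>
    have hk : ωthr < ω T k := hwell T hT k
    rw [hdyn T hT k]
    set x := ω T k with hx
    have hc : 0 < T / M := div_pos hT hM
    have hs : 0 < x - ωthr := by linarith
    have hd : 0 ≤ ωbar - x := by linarith
    -- T/M bound
    have hcle : (T / M) * (γ + V + 1) ≤ ωbar - ωthr := by
      rw [div_mul_eq_mul_div, div_le_iff₀ hM]
      calc T * (γ + V + 1) ≤ (M * (ωbar - ωthr) / (γ + V + 1)) * (γ + V + 1) := by
            apply mul_le_mul_of_nonneg_right hTle (le_of_lt hdenpos)
        _ = M * (ωbar - ωthr) := by field_simp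
        _ = (ωbar - ωthr) * M := by ring
    have hvk : v k ≤ V := (abs_le.mp (hv k)).2
    by_cases hcase : (T / M) * V ≤ ωbar - x
    · -- disturbance-bound case: min ≤ 0
      have hmin : min 0 (γ * (ωbar - x) / (x - ωthr) - v k) ≤ 0 := min_le_left _ _
      have : (T / M) * (v k + min 0 (γ * (ωbar - x) / (x - ωthr) - v k))
          ≤ (T / M) * V := by
        apply mul_le_mul_of_nonneg_left _ (le_of_lt hc)
        linarith
      linarith
    · -- barrier case: use min ≤ g − v
      push_neg at hcase
      have hsg : (T / M) * γ ≤ x - ωthr := by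
        nlinarith [mul_le_mul_of_nonneg_left hvk (le_of_lt hc)]
      have hg : (T / M) * (γ * (ωbar - x) / (x - ωthr)) ≤ ωbar - x := by
        rw [mul_div_assoc', div_le_iff₀ hs]
        nlinarith
      have hmin : min 0 (γ * (ωbar - x) / (x - ωthr) - v k)
          ≤ γ * (ωbar - x) / (x - ωthr) - v k := min_le_right _ _
      have : (T / M) * (v k + min 0 (γ * (ωbar - x) / (x - ωthr) - v k))
          ≤ (T / M) * (γ * (ωbar - x) / (x - ωthr)) := by
        apply mul_le_mul_of_nonneg_left _ (le_of_lt hc)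
        linarith
      linarith
end

section
/- The energy function V(f, ω) = ½ fᵀ Y_b^{-1} f + ½ (ω − ω_∞ 1)ᵀ M (ω − ω_∞ 1) (after shifting f by its equilibrium value f_∞) is nonincreasing along trajectories of the closed-loop system ḟ = Y_b D ω, M ω̇ = −E ω − Dᵀ f + p* + u, provided the input satisfies (ω_i − ω_∞) u_i ≤ 0 componentwise; specifically, d/dt V(f(t) − f_∞, ω(t)) = −(ω − ω_∞ 1)ᵀ E (ω − ω_∞ 1) + Σ_i (ω_i − ω_∞) u_i ≤ 0. -/
/-!
Along a trajectory the time derivative of the shifted energy is the power supplied to it. Measured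
from the equilibrium, the line-flow coupling `Dᵀ` contributes `(f - f_∞) ⬝ D (ω - ω_∞ 1)` to the
`f`-part and exactly its negative to the `ω`-part, so it cancels; what remains is the damping
`-(ω - ω_∞ 1)ᵀ E (ω - ω_∞ 1) ≤ 0` plus the input power `Σ (ω_i - ω_∞) u_i ≤ 0`.
-/

open Matrix Finset

theorem hasDerivAt_half_sum_mul_sq_sub {ι : Type*} [Fintype ι] {g : ℝ → ι → ℝ} {g' : ι → ℝ}
    {t : ℝ} (hg : ∀ i, HasDerivAt (fun s => g s i) (g' i) t) (w c : ι → ℝ) :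
    HasDerivAt (fun s => (1 / 2) * ∑ i, w i * (g s i - c i) ^ 2)
      (∑ i, (g t i - c i) * (w i * g' i)) t := by
  refine ((HasDerivAt.fun_sum fun i _ =>
    (((hg i).sub_const (c i)).pow 2).const_mul (w i)).const_mul (1 / 2)).congr_deriv ?_
  rw [mul_sum]
  refine sum_congr rfl fun i _ => ?_
  push_cast
  ring

theorem power_balance {κ ι : Type*} [Fintype κ] [Fintype ι] [DecidableEq ι]
    (D : Matrix κ ι ℝ) (ed pstar : ι → ℝ) (finf : κ → ℝ) (ωinf : ℝ)
    (heq1 : D *ᵥ (fun _ => ωinf) = 0)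
    (heq2 : -(diagonal ed *ᵥ (fun _ => ωinf)) - Dᵀ *ᵥ finf + pstar = 0)
    (φ : κ → ℝ) (w v : ι → ℝ) :
    (φ - finf) ⬝ᵥ (D *ᵥ w)
        + (w - fun _ => ωinf) ⬝ᵥ (-(diagonal ed *ᵥ w) - Dᵀ *ᵥ φ + pstar + v)
      = -(∑ i, ed i * (w i - ωinf) ^ 2) + ∑ i, (w i - ωinf) * v i := by
  set x : ι → ℝ := w - fun _ => ωinf with hx
  have hflow : D *ᵥ w = D *ᵥ x := by rw [hx, mulVec_sub, heq1, sub_zero]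
  have hforce : -(diagonal ed *ᵥ w) - Dᵀ *ᵥ φ + pstar + v
      = -(diagonal ed *ᵥ x) - Dᵀ *ᵥ (φ - finf) + v := by
    rw [hx, mulVec_sub, mulVec_sub]
    linear_combination heq2
  rw [hflow, hforce, ← dotProduct_transpose_mulVec]
  simp only [dotProduct, mulVec_diagonal, Pi.add_apply, Pi.sub_apply, Pi.neg_apply, hx]
  rw [← sum_neg_distrib, ← sum_add_distrib, ← sum_add_distrib]
  refine sum_congr rfl fun i _ => ?_
  ring

/-- The shifted energy V(f−f_∞, ω) = ½ (f−f_∞)ᵀ Y_b⁻¹ (f−f_∞) + ½ (ω−ω_∞1)ᵀ M (ω−ω_∞1)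
is nonincreasing along closed-loop trajectories when (ω_i − ω_∞) u_i ≤ 0:
its derivative equals −(ω−ω_∞1)ᵀ E (ω−ω_∞1) + Σ_i (ω_i−ω_∞) u_i ≤ 0. -/
theorem energy_function_nonincreasing
    (m n : ℕ) (yb : Fin m → ℝ) (md ed : Fin n → ℝ)
    (hyb : ∀ k, 0 < yb k) (hmd : ∀ i, 0 < md i) (hed : ∀ i, 0 < ed i)
    (D : Matrix (Fin m) (Fin n) ℝ) (pstar : Fin n → ℝ)
    (finf : Fin m → ℝ) (ωinf : ℝ)
    -- equilibrium conditions
    (heq1 : D *ᵥ (fun _ => ωinf) = 0)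
    (heq2 : -(Matrix.diagonal ed *ᵥ (fun _ => ωinf)) - Dᵀ *ᵥ finf + pstar = 0)
    (f : ℝ → Fin m → ℝ) (ω : ℝ → Fin n → ℝ) (u : ℝ → Fin n → ℝ)
    (hf : ∀ t : ℝ, ∀ e : Fin m,
      HasDerivAt (fun s => f s e) ((Matrix.diagonal yb *ᵥ (D *ᵥ ω t)) e) t)
    (hω : ∀ t : ℝ, ∀ i : Fin n,
      HasDerivAt (fun s => ω s i)
        ((-(Matrix.diagonal ed *ᵥ ω t) - Dᵀ *ᵥ f t + pstar + u t) i / md i) t)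
    (hsign : ∀ t : ℝ, ∀ i : Fin n, (ω t i - ωinf) * u t i ≤ 0) :
    ∀ t : ℝ,
      HasDerivAt
        (fun s => (1/2) * ∑ e : Fin m, (f s e - finf e)^2 / yb e
          + (1/2) * ∑ i : Fin n, md i * (ω s i - ωinf)^2)
        (-(∑ i : Fin n, ed i * (ω t i - ωinf)^2)
          + ∑ i : Fin n, (ω t i - ωinf) * u t i) t ∧
      (-(∑ i : Fin n, ed i * (ω t i - ωinf)^2)
          + ∑ i : Fin n, (ω t i - ωinf) * u t i) ≤ 0 := by
  intro t
  refine ⟨?_, add_nonpos (neg_nonpos.2 (sum_nonneg fun i _ =>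
    mul_nonneg (hed i).le (sq_nonneg _))) (sum_nonpos fun i _ => hsign t i)⟩
  have hV := (hasDerivAt_half_sum_mul_sq_sub (hf t) (fun e => (yb e)⁻¹) finf).fun_add
    (hasDerivAt_half_sum_mul_sq_sub (hω t) md fun _ => ωinf)
  simp only [mulVec_diagonal, inv_mul_cancel_left₀ (hyb _).ne',
    mul_div_cancel₀ _ (hmd _).ne'] at hV
  rw [← power_balance D ed pstar finf ωinf heq1 heq2 (f t) (ω t) (u t)]
  simpa only [div_eq_inv_mul, dotProduct, Pi.sub_apply] using hV
end
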